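/- The relation r is an equivalence relation on C, and the quotient map q : C → X is a surjective local homeomorphism. -/

import Mathlib

/-! The relation only glues the arc `A = [(0,1)]` onto its translate `A + [1] = [(1,2)]`, and these
two arcs are disjoint. Hence `r` is "equal, or differ by the translation `+[1]` between `A` and
`A + [1]`", which is transitive because `A ∩ (A + [1]) = ∅`. The saturation of an open `U` is
`U ∪ ((U ∩ A) + [1]) ∪ (A ∩ (U - [1]))`, which is open, so `q` is an open map; and two points of
an arc of length `1` never differ by `±[1]`, so `q` is injective on such arcs. A continuous,
open, locally injective map is a local homeomorphism. -/

/-- The additive circle `ℝ/3ℤ`. -/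
abbrev CircleThree : Type := AddCircle (3 : ℝ)

/-- The relation `r` on `C = ℝ/3ℤ`: `r x y` iff `x = y`, or there is `t ∈ (0,1)`
with (`x = [t]` and `y = [t+1]`) or (`x = [t+1]` and `y = [t]`). -/
def relAabAb (x y : CircleThree) : Prop :=
  x = y ∨ ∃ t : ℝ, 0 < t ∧ t < 1 ∧
    ((x = (t : CircleThree) ∧ y = ((t + 1 : ℝ) : CircleThree)) ∨
     (x = ((t + 1 : ℝ) : CircleThree) ∧ y = (t : CircleThree)))

open Set Topology

theorem IsOpenMap.isLocalHomeomorph {X Y : Type*} [TopologicalSpace X] [TopologicalSpace Y]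
    {f : X → Y} (hc : Continuous f) (ho : IsOpenMap f) (hi : IsLocallyInjective f) :
    IsLocalHomeomorph f := by
  refine isLocalHomeomorph_iff_isOpenEmbedding_restrict.mpr fun x => ?_
  obtain ⟨U, hU, hxU, hinj⟩ := hi x
  exact ⟨U, hU.mem_nhds hxU, isOpenEmbedding_iff_continuous_injective_isOpenMap.mpr
    ⟨hc.comp continuous_subtype_val, injOn_iff_injective.mp hinj, ho.domRestrict hU⟩⟩

namespace CircleThree

instance : Fact (0 < (3 : ℝ)) := ⟨by norm_num⟩

def gluedArc : Set CircleThree := ((↑) : ℝ → CircleThree) '' Ioo 0 1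

theorem isOpen_gluedArc : IsOpen gluedArc :=
  QuotientAddGroup.isOpenMap_coe _ isOpen_Ioo

theorem add_one_notMem_gluedArc {x : CircleThree} (hx : x ∈ gluedArc) :
    x + ((1 : ℝ) : CircleThree) ∉ gluedArc := by
  rintro ⟨s, ⟨hs0, hs1⟩, hs⟩
  obtain ⟨t, ⟨ht0, ht1⟩, rfl⟩ := hx
  rw [← AddCircle.coe_add, AddCircle.coe_eq_coe_iff_of_mem_Ico (a := 0)
    ⟨hs0.le, by linarith⟩ ⟨by linarith, by linarith⟩] at hs
  linarith

end CircleThree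

open CircleThree

theorem relAabAb_iff {x y : CircleThree} :
    relAabAb x y ↔ x = y ∨ (x ∈ gluedArc ∧ y = x + ((1 : ℝ) : CircleThree)) ∨
      (y ∈ gluedArc ∧ x = y + ((1 : ℝ) : CircleThree)) := by
  simp only [relAabAb, gluedArc, mem_image, mem_Ioo, AddCircle.coe_add]
  constructor
  · rintro (rfl | ⟨t, ht0, ht1, ⟨rfl, rfl⟩ | ⟨rfl, rfl⟩⟩)
    · exact Or.inl rfl
    · exact Or.inr (Or.inl ⟨⟨t, ⟨ht0, ht1⟩, rfl⟩, rfl⟩)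
    · exact Or.inr (Or.inr ⟨⟨t, ⟨ht0, ht1⟩, rfl⟩, rfl⟩)
  · rintro (rfl | ⟨⟨t, ⟨ht0, ht1⟩, rfl⟩, rfl⟩ | ⟨⟨t, ⟨ht0, ht1⟩, rfl⟩, rfl⟩)
    · exact Or.inl rfl
    · exact Or.inr ⟨t, ht0, ht1, Or.inl ⟨rfl, rfl⟩⟩
    · exact Or.inr ⟨t, ht0, ht1, Or.inr ⟨rfl, rfl⟩⟩

theorem relAabAb_trans {x y z : CircleThree} (hxy : relAabAb x y) (hyz : relAabAb y z) :
    relAabAb x z := by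
  rw [relAabAb_iff] at *
  rcases hxy with rfl | ⟨hx, rfl⟩ | ⟨hy, rfl⟩
  · exact hyz
  · rcases hyz with rfl | ⟨hy, rfl⟩ | ⟨hz, hyz⟩
    · exact Or.inr (Or.inl ⟨hx, rfl⟩)
    · exact absurd hy (add_one_notMem_gluedArc hx)
    · exact Or.inl (add_right_cancel hyz)
  · rcases hyz with rfl | ⟨-, rfl⟩ | ⟨hz, rfl⟩
    · exact Or.inr (Or.inr ⟨hy, rfl⟩)
    · exact Or.inl rfl
    · exact absurd hy (add_one_notMem_gluedArc hz)

theorem equivalence_relAabAb : Equivalence relAabAb where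
  refl _ := Or.inl rfl
  symm h := by
    rw [relAabAb_iff] at h ⊢
    tauto
  trans := relAabAb_trans

theorem quotMk_relAabAb_eq_iff {x y : CircleThree} :
    Quot.mk relAabAb x = Quot.mk relAabAb y ↔ relAabAb x y :=
  ⟨fun h => equivalence_relAabAb.eqvGen_iff.mp (Quot.eqvGen_exact h), Quot.sound⟩

theorem preimage_image_quotMk_relAabAb (U : Set CircleThree) :
    Quot.mk relAabAb ⁻¹' (Quot.mk relAabAb '' U) =
      U ∪ (· + ((1 : ℝ) : CircleThree)) '' (U ∩ gluedArc) ∪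
        gluedArc ∩ (· + ((1 : ℝ) : CircleThree)) ⁻¹' U := by
  ext x
  simp only [mem_preimage, mem_image, quotMk_relAabAb_eq_iff, relAabAb_iff, mem_union,
    mem_inter_iff]
  constructor
  · rintro ⟨u, hu, rfl | ⟨hu', rfl⟩ | ⟨hx, rfl⟩⟩
    exacts [Or.inl (Or.inl hu), Or.inl (Or.inr ⟨u, ⟨hu, hu'⟩, rfl⟩), Or.inr ⟨hx, hu⟩]
  · rintro ((hx | ⟨u, ⟨hu, hu'⟩, rfl⟩) | ⟨hx, hu⟩)
    exacts [⟨x, hx, Or.inl rfl⟩, ⟨u, hu, Or.inr (Or.inl ⟨hu', rfl⟩)⟩,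
      ⟨_, hu, Or.inr (Or.inr ⟨hx, rfl⟩)⟩]

theorem isOpenMap_quotMk_relAabAb : IsOpenMap (Quot.mk relAabAb) := by
  intro U hU
  rw [isOpen_coinduced, preimage_image_quotMk_relAabAb]
  exact (hU.union ((Homeomorph.addRight _).isOpenMap _ (hU.inter isOpen_gluedArc))).union
    (isOpen_gluedArc.inter (hU.preimage (continuous_add_const _)))

theorem injOn_quotMk_relAabAb (s : ℝ) :
    InjOn (Quot.mk relAabAb) (((↑) : ℝ → CircleThree) '' Ioo (s - 2⁻¹) (s + 2⁻¹)) := by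
  rintro _ ⟨a, ⟨ha1, ha2⟩, rfl⟩ _ ⟨b, ⟨hb1, hb2⟩, rfl⟩ hab
  -- `[a] = [b] + [1]` would force `a = b + 1`, as both lie in `[s - 1/2, s - 1/2 + 3)`
  have shift {c d : ℝ} (hc : c ∈ Ioo (s - 2⁻¹) (s + 2⁻¹)) (hd : d ∈ Ioo (s - 2⁻¹) (s + 2⁻¹))
      (h : (c : CircleThree) = d + ((1 : ℝ) : CircleThree)) : False := by
    rw [← AddCircle.coe_add, AddCircle.coe_eq_coe_iff_of_mem_Ico (a := s - 2⁻¹)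
      ⟨hc.1.le, by linarith [hc.2]⟩ ⟨by linarith [hd.1], by linarith [hd.2]⟩] at h
    linarith [hc.2, hd.1]
  rcases relAabAb_iff.mp (quotMk_relAabAb_eq_iff.mp hab) with h | ⟨-, h⟩ | ⟨-, h⟩
  · exact h
  · exact (shift ⟨hb1, hb2⟩ ⟨ha1, ha2⟩ h).elim
  · exact (shift ⟨ha1, ha2⟩ ⟨hb1, hb2⟩ h).elim

theorem isLocallyInjective_quotMk_relAabAb : IsLocallyInjective (Quot.mk relAabAb) := by
  intro x
  obtain ⟨s, rfl⟩ := QuotientAddGroup.mk_surjective x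
  exact ⟨_, QuotientAddGroup.isOpenMap_coe _ isOpen_Ioo,
    ⟨s, ⟨by norm_num, by norm_num⟩, rfl⟩, injOn_quotMk_relAabAb s⟩

theorem stmt_1 :
    Equivalence relAabAb ∧
    Function.Surjective (Quot.mk relAabAb) ∧
    IsLocalHomeomorph (Quot.mk relAabAb) :=
  ⟨equivalence_relAabAb, Quot.mk_surjective,
    isOpenMap_quotMk_relAabAb.isLocalHomeomorph continuous_quot_mk
      isLocallyInjective_quotMk_relAabAb⟩
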